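/- arXiv:0911.2263 — 4 statements merged into one kernel-verified Lean document; each statement's English description precedes it below -/
import Mathlib

section
/- Let a, δ, r > 0 satisfy r² + (1+a)²δ² ≤ 4, and let ρ : ℂ → ℝ satisfy ρ(z) < δ − (aδ/r)·Re z for all |z| ≤ r. Set Ω = {(z,w) ∈ ℂ² : Re w + ρ(z) < 0} ∩ B(0,2). Then the holomorphic map φ(ζ) = (rζ, −δ + aδζ) maps the open unit disc 𝔻 into Ω, with φ(0) = (0, −δ) and φ'(0) = (r, aδ); consequently, with X = (r/(aδ), 1), the Kobayashi metric of Ω satisfies F_K((0,−δ), X) ≤ 1/(aδ). -/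
/-!
The affine disc `ζ ↦ (z, w) = (rζ, -δ + aδζ)` competes in the infimum defining `F_K`. For
`|ζ| < 1` we have `|z| < r`, so `ρ(z) < δ - aδ Re ζ = -Re w`; and `|w| < (1 + a)δ` by the triangle
inequality, so `r² + (1 + a)²δ² ≤ 4` keeps the disc in `B(0, 2)`. Its derivative at `0` is
`(r, aδ) = aδ · X`, whence `F_K((0, -δ), X) ≤ 1/(aδ)`.
-/

open Metric Set

/-- The Kobayashi metric of a domain `Ω` at a point `Q` in direction `X`. -/
noncomputable def kobayashiMetric {E : Type*} [NormedAddCommGroup E] [NormedSpace ℂ E]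
    (Ω : Set E) (Q X : E) : ℝ :=
  sInf {α : ℝ | 0 < α ∧ ∃ φ : ℂ → E, DifferentiableOn ℂ φ (ball (0:ℂ) 1) ∧
    MapsTo φ (ball (0:ℂ) 1) Ω ∧ φ 0 = Q ∧ deriv φ 0 = α⁻¹ • X}

theorem kobayashiMetric_le_of_disc {E : Type*} [NormedAddCommGroup E] [NormedSpace ℂ E]
    {Ω : Set E} {Q X : E} {α : ℝ} (hα : 0 < α) {φ : ℂ → E}
    (hφ : DifferentiableOn ℂ φ (ball 0 1)) (hmaps : MapsTo φ (ball 0 1) Ω) (h0 : φ 0 = Q)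
    (hderiv : deriv φ 0 = α⁻¹ • X) :
    kobayashiMetric Ω Q X ≤ α :=
  csInf_le ⟨0, fun _ h => h.1.le⟩ ⟨hα, φ, hφ, hmaps, h0, hderiv⟩

theorem hasDerivAt_const_add_smul {E : Type*} [NormedAddCommGroup E] [NormedSpace ℂ E]
    (p v : E) (z : ℂ) : HasDerivAt (fun ζ : ℂ => p + ζ • v) v z := by
  simpa using ((hasDerivAt_id z).smul_const v).const_add p

theorem EuclideanSpace.norm_sq_toLp_fin_two {𝕜 : Type*} [RCLike 𝕜] (x y : 𝕜) :
    ‖WithLp.toLp 2 ![x, y]‖ ^ 2 = ‖x‖ ^ 2 + ‖y‖ ^ 2 := by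
  simp [EuclideanSpace.norm_sq_eq, Fin.sum_univ_two]

theorem Complex.norm_add_mul_lt_of_norm_lt_one (p : ℂ) {c ζ : ℂ} (hc : c ≠ 0) (hζ : ‖ζ‖ < 1) :
    ‖p + c * ζ‖ < ‖p‖ + ‖c‖ :=
  calc ‖p + c * ζ‖ ≤ ‖p‖ + ‖c‖ * ‖ζ‖ := (norm_add_le _ _).trans_eq (by rw [norm_mul])
    _ < ‖p‖ + ‖c‖ := by gcongr; exact mul_lt_of_lt_one_right (norm_pos_iff.2 hc) hζ

section AffineDisc

variable {a δ r : ℝ} {ζ : ℂ}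

theorem re_affineDisc_add_lt_zero (hr : 0 < r) {ρ : ℂ → ℝ}
    (hρ : ∀ z : ℂ, ‖z‖ ≤ r → ρ z < δ - (a * δ / r) * z.re) (hζ : ‖ζ‖ ≤ 1) :
    (-(δ : ℂ) + a * δ * ζ).re + ρ (r * ζ) < 0 := by
  have hnorm : ‖(r : ℂ) * ζ‖ ≤ r := by
    rw [norm_mul, Complex.norm_real, Real.norm_of_nonneg hr.le]
    exact mul_le_of_le_one_right hr.le hζ
  have hbound : ρ (r * ζ) < δ - a * δ * ζ.re := by
    convert hρ _ hnorm using 2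
    rw [Complex.re_ofReal_mul]
    field_simp
  simp only [Complex.add_re, Complex.neg_re, Complex.ofReal_re, Complex.re_ofReal_mul,
    ← Complex.ofReal_mul]
  linarith

theorem norm_affineDisc_lt_two (ha : 0 < a) (hδ : 0 < δ) (hr : 0 < r)
    (hball : r ^ 2 + (1 + a) ^ 2 * δ ^ 2 ≤ 4) (hζ : ‖ζ‖ < 1) :
    ‖WithLp.toLp 2 ![(r : ℂ) * ζ, -(δ : ℂ) + a * δ * ζ]‖ < 2 := by
  have hz : ‖(r : ℂ) * ζ‖ < r := by
    rw [norm_mul, Complex.norm_real, Real.norm_of_nonneg hr.le]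
    exact mul_lt_of_lt_one_right hr hζ
  have hw : ‖-(δ : ℂ) + a * δ * ζ‖ < (1 + a) * δ := by
    have haδ : ((a : ℂ) * δ) ≠ 0 := by norm_cast; positivity
    convert Complex.norm_add_mul_lt_of_norm_lt_one (-(δ : ℂ)) haδ hζ using 1
    rw [norm_neg, ← Complex.ofReal_mul, Complex.norm_real, Complex.norm_real,
      Real.norm_of_nonneg hδ.le, Real.norm_of_nonneg (by positivity)]
    ring
  have hsq : ‖WithLp.toLp 2 ![(r : ℂ) * ζ, -(δ : ℂ) + a * δ * ζ]‖ ^ 2 < 2 ^ 2 := by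
    rw [EuclideanSpace.norm_sq_toLp_fin_two]
    nlinarith [norm_nonneg ((r : ℂ) * ζ), norm_nonneg (-(δ : ℂ) + a * δ * ζ)]
  exact lt_of_pow_lt_pow_left₀ 2 zero_le_two hsq

end AffineDisc

/-- Let `a, δ, r > 0` with `r² + (1+a)²δ² ≤ 4`, and let `ρ : ℂ → ℝ` satisfy
`ρ(z) < δ - (aδ/r)·Re z` for `|z| ≤ r`.  With
`Ω = {(z,w) : Re w + ρ(z) < 0} ∩ B(0,2) ⊂ ℂ²`, the map
`φ(ζ) = (rζ, -δ + aδζ)` is a holomorphic map of the unit disc into `Ω` with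
`φ(0) = (0,-δ)` and `φ'(0) = (r, aδ)`; consequently, with `X = (r/(aδ), 1)`,
`F_K((0,-δ), X) ≤ 1/(aδ)`. -/
theorem kobayashi_disc_bound_C2 (a δ r : ℝ) (ha : 0 < a) (hδ : 0 < δ) (hr : 0 < r)
    (hball : r ^ 2 + (1 + a) ^ 2 * δ ^ 2 ≤ 4)
    (ρ : ℂ → ℝ) (hρ : ∀ z : ℂ, ‖z‖ ≤ r → ρ z < δ - (a * δ / r) * z.re)
    (Ω : Set (EuclideanSpace ℂ (Fin 2)))
    (hΩ : Ω = {p : EuclideanSpace ℂ (Fin 2) | (p 1).re + ρ (p 0) < 0} ∩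
      ball (0 : EuclideanSpace ℂ (Fin 2)) 2)
    (φ : ℂ → EuclideanSpace ℂ (Fin 2))
    (hφ : φ = fun ζ : ℂ => (WithLp.equiv 2 (Fin 2 → ℂ)).symm
      ![(r : ℂ) * ζ, -(δ : ℂ) + (a : ℂ) * (δ : ℂ) * ζ]) :
    DifferentiableOn ℂ φ (ball (0:ℂ) 1) ∧
    MapsTo φ (ball (0:ℂ) 1) Ω ∧
    φ 0 = (WithLp.equiv 2 (Fin 2 → ℂ)).symm ![0, -(δ : ℂ)] ∧
    deriv φ 0 = (WithLp.equiv 2 (Fin 2 → ℂ)).symm ![(r : ℂ), (a : ℂ) * (δ : ℂ)] ∧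
    kobayashiMetric Ω ((WithLp.equiv 2 (Fin 2 → ℂ)).symm ![0, -(δ : ℂ)])
      ((WithLp.equiv 2 (Fin 2 → ℂ)).symm ![((r / (a * δ) : ℝ) : ℂ), 1]) ≤ 1 / (a * δ) := by
  simp only [WithLp.equiv_symm_apply] at hφ ⊢
  have hline : φ = fun ζ : ℂ =>
      WithLp.toLp 2 ![0, -(δ : ℂ)] + ζ • WithLp.toLp 2 ![(r : ℂ), a * δ] := by
    subst hφ; funext ζ; ext i; fin_cases i <;> simp <;> ring
  have hderiv (z : ℂ) : HasDerivAt φ (WithLp.toLp 2 ![(r : ℂ), a * δ]) z :=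
    hline ▸ hasDerivAt_const_add_smul _ _ z
  have hdiff : DifferentiableOn ℂ φ (ball 0 1) := fun z _ =>
    (hderiv z).differentiableAt.differentiableWithinAt
  have h0 : φ 0 = WithLp.toLp 2 ![0, -(δ : ℂ)] := by simp [hline]
  have hmaps : MapsTo φ (ball 0 1) Ω := by
    intro ζ hζ
    rw [mem_ball_zero_iff] at hζ
    subst hφ hΩ
    exact ⟨re_affineDisc_add_lt_zero hr hρ hζ.le,
      mem_ball_zero_iff.2 (norm_affineDisc_lt_two ha hδ hr hball hζ)⟩
  have hX : WithLp.toLp 2 ![(r : ℂ), a * δ] =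
      (1 / (a * δ))⁻¹ • WithLp.toLp 2 ![((r / (a * δ) : ℝ) : ℂ), 1] := by
    have ha' : (a : ℂ) ≠ 0 := by exact_mod_cast ha.ne'
    have hδ' : (δ : ℂ) ≠ 0 := by exact_mod_cast hδ.ne'
    ext i; fin_cases i <;> simp [Complex.real_smul]; field_simp
  refine ⟨hdiff, hmaps, h0, (hderiv 0).deriv, ?_⟩
  exact kobayashiMetric_le_of_disc (by positivity) hdiff hmaps h0 ((hderiv 0).deriv.trans hX)
end

section
/- Let a, δ, r > 0 satisfy r⁶ + r⁴ + (1+a)²δ² ≤ 4, and let ρ̃ : ℂ² → ℝ satisfy ρ̃(ζ³, ζ²) < δ − (aδ/r)·Re ζ for all ζ ∈ ℂ with |ζ| ≤ r. Set Ω = {(s,t,w) ∈ ℂ³ : Re w + ρ̃(s,t) < 0} ∩ B(0,2). Then the holomorphic map φ(ζ) = (r³ζ³, r²ζ², −δ + aδζ) maps the open unit disc 𝔻 into Ω, with φ(0) = (0,0,−δ) and φ'(0) = (0, 0, aδ); consequently the Kobayashi metric of Ω satisfies F_K((0,0,−δ), ν) ≤ 1/(aδ), where ν = (0,0,1). -/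
/-!
The Kobayashi metric is an infimum over holomorphic discs, so a single disc through
`(0, 0, -δ)` with velocity `aδ · ν` bounds it by `1 / (aδ)`. The disc
`ζ ↦ (r³ζ³, r²ζ², -δ + aδζ)` stays in the ball of radius `2` by the constraint on `r, a, δ`,
and in `Re w + ρ̃(s, t) < 0` because the bound on `ρ̃` at the point `rζ` exactly cancels the
real part `-δ + aδ Re ζ` of its last coordinate.
-/

open Metric Set

open WithLp

theorem kobayashiMetric_le_inv_of_disc {E : Type*} [NormedAddCommGroup E] [NormedSpace ℂ E]
    {Ω : Set E} {Q X : E} {φ : ℂ → E} {c : ℝ} (hc : 0 < c)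
    (hφ : DifferentiableOn ℂ φ (ball 0 1)) (hmaps : MapsTo φ (ball 0 1) Ω) (h0 : φ 0 = Q)
    (hderiv : deriv φ 0 = c • X) : kobayashiMetric Ω Q X ≤ c⁻¹ :=
  csInf_le ⟨0, fun _ hα => hα.1.le⟩ ⟨inv_pos.2 hc, φ, hφ, hmaps, h0, by rwa [inv_inv]⟩

noncomputable def discMap (a δ r : ℝ) (ζ : ℂ) : EuclideanSpace ℂ (Fin 3) :=
  toLp 2 ![(r : ℂ) ^ 3 * ζ ^ 3, (r : ℂ) ^ 2 * ζ ^ 2, -(δ : ℂ) + (a : ℂ) * δ * ζ]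

namespace discMap

variable {a δ r : ℝ}

theorem hasDerivAt (ζ : ℂ) :
    HasDerivAt (discMap a δ r)
      (toLp 2 ![(r : ℂ) ^ 3 * (3 * ζ ^ 2), (r : ℂ) ^ 2 * (2 * ζ), (a : ℂ) * δ]) ζ := by
  have hcoords : HasDerivAt
      (fun ζ : ℂ => ![(r : ℂ) ^ 3 * ζ ^ 3, (r : ℂ) ^ 2 * ζ ^ 2, -(δ : ℂ) + (a : ℂ) * δ * ζ])
      ![(r : ℂ) ^ 3 * (3 * ζ ^ 2), (r : ℂ) ^ 2 * (2 * ζ), (a : ℂ) * δ] ζ := by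
    rw [hasDerivAt_pi]
    intro i
    fin_cases i
    · simpa using (hasDerivAt_pow 3 ζ).const_mul ((r : ℂ) ^ 3)
    · simpa using (hasDerivAt_pow 2 ζ).const_mul ((r : ℂ) ^ 2)
    · simpa using ((hasDerivAt_id ζ).const_mul ((a : ℂ) * δ)).const_add (-(δ : ℂ))
  exact (PiLp.hasFDerivAt_toLp 2 _).comp_hasDerivAt ζ hcoords

theorem differentiable : Differentiable ℂ (discMap a δ r) :=
  fun ζ => (hasDerivAt ζ).differentiableAt

theorem deriv_zero : deriv (discMap a δ r) 0 = toLp 2 ![0, 0, (a : ℂ) * δ] := by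
  simpa using (hasDerivAt (a := a) (δ := δ) (r := r) 0).deriv

theorem apply_zero : discMap a δ r 0 = toLp 2 ![0, 0, -(δ : ℂ)] := by
  simp [discMap]

theorem norm_lt_two (ha : 0 < a) (hδ : 0 < δ)
    (hball : r ^ 6 + r ^ 4 + (1 + a) ^ 2 * δ ^ 2 ≤ 4) {ζ : ℂ} (hζ : ‖ζ‖ < 1) :
    ‖discMap a δ r ζ‖ < 2 := by
  have hlast : ‖-(δ : ℂ) + (a : ℂ) * δ * ζ‖ < (1 + a) * δ :=
    calc ‖-(δ : ℂ) + (a : ℂ) * δ * ζ‖ ≤ δ + a * δ * ‖ζ‖ := by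
          simpa [abs_of_pos ha, abs_of_pos hδ] using norm_add_le (-(δ : ℂ)) ((a : ℂ) * δ * ζ)
      _ < (1 + a) * δ := by nlinarith [mul_pos ha hδ]
  have hζ6 : ‖ζ‖ ^ 6 ≤ 1 := pow_le_one₀ (norm_nonneg ζ) hζ.le
  have hζ4 : ‖ζ‖ ^ 4 ≤ 1 := pow_le_one₀ (norm_nonneg ζ) hζ.le
  have hsq : ‖discMap a δ r ζ‖ ^ 2 < 2 ^ 2 :=
    calc ‖discMap a δ r ζ‖ ^ 2
        = r ^ 6 * ‖ζ‖ ^ 6 + r ^ 4 * ‖ζ‖ ^ 4 + ‖-(δ : ℂ) + (a : ℂ) * δ * ζ‖ ^ 2 := by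
          simp [EuclideanSpace.norm_sq_eq, discMap, Fin.sum_univ_three, norm_pow]
          rw [mul_pow, ← pow_mul, Even.pow_abs ⟨3, rfl⟩]
          ring
      _ < r ^ 6 + r ^ 4 + ((1 + a) * δ) ^ 2 := by
          have h6 : r ^ 6 * ‖ζ‖ ^ 6 ≤ r ^ 6 := mul_le_of_le_one_right (by positivity) hζ6
          have h4 : r ^ 4 * ‖ζ‖ ^ 4 ≤ r ^ 4 := mul_le_of_le_one_right (by positivity) hζ4
          have h2 := pow_lt_pow_left₀ hlast (norm_nonneg _) two_ne_zero
          linarith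
      _ ≤ 2 ^ 2 := by linarith
  exact (pow_lt_pow_iff_left₀ (norm_nonneg _) zero_le_two two_ne_zero).1 hsq

theorem re_add_lt_zero (hr : 0 < r) (ρ : ℂ × ℂ → ℝ)
    (hρ : ∀ ζ : ℂ, ‖ζ‖ ≤ r → ρ (ζ ^ 3, ζ ^ 2) < δ - (a * δ / r) * ζ.re)
    {ζ : ℂ} (hζ : ‖ζ‖ ≤ 1) :
    (discMap a δ r ζ 2).re + ρ (discMap a δ r ζ 0, discMap a δ r ζ 1) < 0 := by
  have hrζ : ‖(r : ℂ) * ζ‖ ≤ r := by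
    rw [norm_mul, Complex.norm_of_nonneg hr.le]
    exact mul_le_of_le_one_right hr.le hζ
  have hscale : a * δ / r * ((r : ℂ) * ζ).re = a * δ * ζ.re := by
    rw [Complex.re_ofReal_mul]; field_simp
  have key := hscale ▸ hρ _ hrζ
  have h0 : discMap a δ r ζ 0 = ((r : ℂ) * ζ) ^ 3 := by simp [discMap, mul_pow]
  have h1 : discMap a δ r ζ 1 = ((r : ℂ) * ζ) ^ 2 := by simp [discMap, mul_pow]
  have h2 : (discMap a δ r ζ 2).re = -δ + a * δ * ζ.re := by simp [discMap]
  rw [h0, h1, h2]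
  linarith

theorem mapsTo (ha : 0 < a) (hδ : 0 < δ) (hr : 0 < r)
    (hball : r ^ 6 + r ^ 4 + (1 + a) ^ 2 * δ ^ 2 ≤ 4) (ρ : ℂ × ℂ → ℝ)
    (hρ : ∀ ζ : ℂ, ‖ζ‖ ≤ r → ρ (ζ ^ 3, ζ ^ 2) < δ - (a * δ / r) * ζ.re) :
    MapsTo (discMap a δ r) (ball 0 1)
      ({p : EuclideanSpace ℂ (Fin 3) | (p 2).re + ρ (p 0, p 1) < 0} ∩ ball 0 2) := by
  intro ζ hζ
  rw [mem_ball_zero_iff] at hζ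
  exact ⟨re_add_lt_zero hr ρ hρ hζ.le, mem_ball_zero_iff.2 (norm_lt_two ha hδ hball hζ)⟩

end discMap

/-- Let `a, δ, r > 0` with `r⁶ + r⁴ + (1+a)²δ² ≤ 4`, and let `ρ̃ : ℂ² → ℝ` satisfy
`ρ̃(ζ³, ζ²) < δ - (aδ/r)·Re ζ` for `|ζ| ≤ r`.  With
`Ω = {(s,t,w) : Re w + ρ̃(s,t) < 0} ∩ B(0,2) ⊂ ℂ³`, the map
`φ(ζ) = (r³ζ³, r²ζ², -δ + aδζ)` is a holomorphic map of the unit disc into `Ω` with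
`φ(0) = (0,0,-δ)` and `φ'(0) = (0,0,aδ)`; consequently `F_K((0,0,-δ), ν) ≤ 1/(aδ)`
for `ν = (0,0,1)`. -/
theorem kobayashi_disc_bound_C3 (a δ r : ℝ) (ha : 0 < a) (hδ : 0 < δ) (hr : 0 < r)
    (hball : r ^ 6 + r ^ 4 + (1 + a) ^ 2 * δ ^ 2 ≤ 4)
    (ρ : ℂ × ℂ → ℝ)
    (hρ : ∀ ζ : ℂ, ‖ζ‖ ≤ r → ρ (ζ ^ 3, ζ ^ 2) < δ - (a * δ / r) * ζ.re)
    (Ω : Set (EuclideanSpace ℂ (Fin 3)))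
    (hΩ : Ω = {p : EuclideanSpace ℂ (Fin 3) | (p 2).re + ρ (p 0, p 1) < 0} ∩
      ball (0 : EuclideanSpace ℂ (Fin 3)) 2)
    (φ : ℂ → EuclideanSpace ℂ (Fin 3))
    (hφ : φ = fun ζ : ℂ => (WithLp.equiv 2 (Fin 3 → ℂ)).symm
      ![(r : ℂ) ^ 3 * ζ ^ 3, (r : ℂ) ^ 2 * ζ ^ 2, -(δ : ℂ) + (a : ℂ) * (δ : ℂ) * ζ]) :
    DifferentiableOn ℂ φ (ball (0:ℂ) 1) ∧
    MapsTo φ (ball (0:ℂ) 1) Ω ∧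
    φ 0 = (WithLp.equiv 2 (Fin 3 → ℂ)).symm ![0, 0, -(δ : ℂ)] ∧
    deriv φ 0 = (WithLp.equiv 2 (Fin 3 → ℂ)).symm ![0, 0, (a : ℂ) * (δ : ℂ)] ∧
    kobayashiMetric Ω ((WithLp.equiv 2 (Fin 3 → ℂ)).symm ![0, 0, -(δ : ℂ)])
      ((WithLp.equiv 2 (Fin 3 → ℂ)).symm ![0, 0, 1]) ≤ 1 / (a * δ) := by
  obtain rfl : φ = discMap a δ r := hφ
  subst hΩ
  have hdiff : DifferentiableOn ℂ (discMap a δ r) (ball 0 1) :=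
    discMap.differentiable.differentiableOn
  have hmaps := discMap.mapsTo ha hδ hr hball ρ hρ
  have hderiv : deriv (discMap a δ r) 0 = (a * δ) • toLp 2 ![0, 0, 1] := by
    rw [discMap.deriv_zero]
    ext i
    fin_cases i <;> simp [Complex.real_smul]
  refine ⟨hdiff, hmaps, discMap.apply_zero, discMap.deriv_zero, ?_⟩
  rw [one_div]
  exact kobayashiMetric_le_inv_of_disc (mul_pos ha hδ) hdiff hmaps discMap.apply_zero hderiv
end

section
/- Let a > 16 be large enough that b(a) exists, let 0 < s ≤ 1/4, and set r = s²/a. Assume 2r ≤ b(a). Then u_a(z) = 1/8 − Re z + (log|z|)/(4 log a) < 0 for all z with 0 < |z| < 2r, and consequently R_a(z) = 0 for all |z| < 2r. -/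
open Set

/-- `u_a(z) = 1/8 − Re z + (log |z|)/(4 log a)`. -/
noncomputable def uFun (a : ℝ) (z : ℂ) : ℝ :=
  1/8 - z.re + Real.log (‖z‖) / (4 * Real.log a)

/-- `S_a = {b ∈ (0,1] : 1/8 − b + (log b)/(4 log a) = 0}`. -/
def Sroot (a : ℝ) : Set ℝ :=
  {b : ℝ | b ∈ Ioc (0:ℝ) 1 ∧ 1/8 - b + Real.log b / (4 * Real.log a) = 0}

/-- `R_a(z) = max{u_a(z), 0}` if `Re z ≤ b(a)` (with `R_a(0) = 0`) and
`R_a(z) = u_a(z)` if `Re z > b(a)`. -/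
noncomputable def RFun (a b : ℝ) (z : ℂ) : ℝ :=
  if z = 0 then 0 else if z.re ≤ b then max (uFun a z) 0 else uFun a z

/-! On `0 < |z| < min(1/a, 1/8)` the logarithmic term of `u_a` is below `-1/4` while
`1/8 - Re z ≤ 1/8 + |z| ≤ 1/4`, so `u_a < 0`. Since `Re z ≤ |z|`, the disc `|z| < 2r` lies in
`Re z ≤ b(a)` once `2r ≤ b(a)`, where `R_a = max(u_a, 0) = 0`; and `r = s²/a ≤ 1/(16a)`
makes `2r` smaller than both `1/a` and `1/8`. -/

lemma log_norm_div_lt_neg_quarter {a : ℝ} {z : ℂ} (ha : 1 < a) (hz0 : 0 < ‖z‖)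
    (hz : ‖z‖ < a⁻¹) : Real.log ‖z‖ / (4 * Real.log a) < -(1/4) := by
  have hla : 0 < Real.log a := Real.log_pos ha
  have hlog : Real.log ‖z‖ < -Real.log a := by
    simpa only [Real.log_inv] using Real.log_lt_log hz0 hz
  rw [div_lt_iff₀ (by positivity)]
  linarith

lemma uFun_neg_of_norm_lt {a : ℝ} {z : ℂ} (ha : 1 < a) (hz0 : 0 < ‖z‖) (hz : ‖z‖ < a⁻¹)
    (hz8 : ‖z‖ ≤ 1/8) : uFun a z < 0 := by
  have hlog := log_norm_div_lt_neg_quarter ha hz0 hz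
  have hre : -z.re ≤ ‖z‖ := (neg_le_abs z.re).trans (Complex.abs_re_le_norm z)
  unfold uFun
  linarith

lemma RFun_eq_zero_of_uFun_nonpos {a b : ℝ} {z : ℂ} (hre : z.re ≤ b)
    (hu : z ≠ 0 → uFun a z ≤ 0) : RFun a b z = 0 := by
  unfold RFun
  split_ifs with hz0
  · rfl
  · exact max_eq_right (hu hz0)

theorem RFun_vanishes_near_zero_general (a b s r : ℝ) (ha : 16 < a)
    (hs : 0 < s) (hs' : s ≤ 1/4) (hr : r = s ^ 2 / a) (h2r : 2 * r ≤ b) :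
    (∀ z : ℂ, 0 < ‖z‖ → ‖z‖ < 2 * r → uFun a z < 0) ∧
    (∀ z : ℂ, ‖z‖ < 2 * r → RFun a b z = 0) := by
  have ha0 : 0 < a := by linarith
  have h2r_le : 2 * r ≤ 1/8 / a := by
    rw [hr, mul_div_assoc']
    gcongr
    nlinarith
  have h2r_lt_inv : 2 * r < a⁻¹ := by
    rw [inv_eq_one_div]
    exact h2r_le.trans_lt (by gcongr; norm_num)
  have h2r_le_eighth : 2 * r ≤ 1/8 := h2r_le.trans (div_le_self (by norm_num) (by linarith))
  have hneg : ∀ z : ℂ, 0 < ‖z‖ → ‖z‖ < 2 * r → uFun a z < 0 := fun z hz0 hz =>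
    uFun_neg_of_norm_lt (by linarith) hz0 (hz.trans h2r_lt_inv) (hz.le.trans h2r_le_eighth)
  refine ⟨hneg, fun z hz => RFun_eq_zero_of_uFun_nonpos ?_ fun hz0 => ?_⟩
  · linarith [Complex.re_le_norm z]
  · exact (hneg z (norm_pos_iff.mpr hz0) hz).le

/-- Let `a > 16` be such that `b(a)` exists, let `0 < s ≤ 1/4` and `r = s²/a`, and
assume `2r ≤ b(a)`.  Then `u_a < 0` on `{0 < |z| < 2r}` and `R_a ≡ 0` on `{|z| < 2r}`. -/
theorem RFun_vanishes_near_zero (a b s r : ℝ) (ha : 16 < a) (hb : IsLeast (Sroot a) b)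
    (hs : 0 < s) (hs' : s ≤ 1/4) (hr : r = s ^ 2 / a) (h2r : 2 * r ≤ b) :
    (∀ z : ℂ, 0 < ‖z‖ → ‖z‖ < 2 * r → uFun a z < 0) ∧
    (∀ z : ℂ, ‖z‖ < 2 * r → RFun a b z = 0) :=
  RFun_vanishes_near_zero_general a b s r ha hs hs' hr h2r
end

section
/- Define q : ℂ² → ℝ by q(s,t) = e^{|s|² + |t|²} |s² − t³|². Then q is strictly plurisubharmonic off the variety V = {(s,t) : s² = t³}: for every (s,t) ∈ ℂ² with s² ≠ t³ and every nonzero L ∈ ℂ², the function λ ↦ q((s,t) + λL) of the complex variable λ has strictly positive Laplacian at λ = 0. -/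
/-!
Along a complex line `λ ↦ (s, t) + λL` we have `q = e^u |F|²` with
`u = |s + λL₁|² + |t + λL₂|²` and `F = (s + λL₁)² - (t + λL₂)³` holomorphic. Adding the second
derivatives in the real directions `1` and `i`, the terms involving `F''` cancel and the rest
completes a square: at `λ = 0`,
`Δ q = 4 e^{|s|² + |t|²} ((|L₁|² + |L₂|²) |F|² + |(s̄ L₁ + t̄ L₂) F + F'|²)`,
which is positive as soon as `L ≠ 0` and `F ≠ 0`.
-/

/-- The Laplacian at `0` of a function `g : ℂ → ℝ` of one complex variable:
`∂²g/∂x²(0) + ∂²g/∂y²(0)`. -/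
noncomputable def laplacianAtZero (g : ℂ → ℝ) : ℝ :=
  deriv (deriv (fun t : ℝ => g (t : ℂ))) 0 +
    deriv (deriv (fun t : ℝ => g ((t : ℂ) * Complex.I))) 0

open Real
open scoped ComplexConjugate RealInnerProductSpace

theorem deriv_deriv_exp_mul_norm_sq {F : Type*} [NormedAddCommGroup F] [InnerProductSpace ℝ F]
    {u u' : ℝ → ℝ} {u'' : ℝ} {p p' : ℝ → F} {p'' : F} {x₀ : ℝ}
    (hu : ∀ x, HasDerivAt u (u' x) x) (hu' : HasDerivAt u' u'' x₀)
    (hp : ∀ x, HasDerivAt p (p' x) x) (hp' : HasDerivAt p' p'' x₀) :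
    deriv (deriv fun x => exp (u x) * ‖p x‖ ^ 2) x₀ =
      exp (u x₀) * ((u'' + u' x₀ ^ 2) * ‖p x₀‖ ^ 2 + 4 * u' x₀ * ⟪p x₀, p' x₀⟫
        + 2 * ‖p' x₀‖ ^ 2 + 2 * ⟪p x₀, p''⟫) := by
  have hderiv : deriv (fun x => exp (u x) * ‖p x‖ ^ 2) =
      fun x => exp (u x) * (u' x * ‖p x‖ ^ 2 + 2 * ⟪p x, p' x⟫) := by
    funext x
    refine (((hu x).exp.mul (hp x).norm_sq).congr_deriv ?_).deriv
    ring
  rw [hderiv]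
  refine (((hu x₀).exp.mul ((hu'.mul (hp x₀).norm_sq).add
    (((hp x₀).inner ℝ hp').const_mul 2))).congr_deriv ?_).deriv
  simp only [Pi.add_apply, Pi.mul_apply, real_inner_self_eq_norm_sq]
  ring

theorem hasDerivAt_add_ofReal_mul (s a : ℂ) (x : ℝ) :
    HasDerivAt (fun x : ℝ => s + x * a) a x := by
  simpa using (((hasDerivAt_id (x : ℂ)).mul_const a).const_add s).comp_ofReal

theorem hasDerivAt_cusp_line (s t a b : ℂ) (x : ℝ) :
    HasDerivAt (fun x : ℝ => (s + x * a) ^ 2 - (t + x * b) ^ 3)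
      (2 * (s + x * a) * a - 3 * (t + x * b) ^ 2 * b) x := by
  refine (((hasDerivAt_add_ofReal_mul s a x).fun_pow 2).sub
    ((hasDerivAt_add_ofReal_mul t b x).fun_pow 3)).congr_deriv ?_
  push_cast
  ring

theorem hasDerivAt_norm_sq_line (s a : ℂ) (x : ℝ) :
    HasDerivAt (fun x : ℝ => ‖s + x * a‖ ^ 2) (2 * ⟪s + x * a, a⟫) x :=
  (hasDerivAt_add_ofReal_mul s a x).norm_sq

theorem hasDerivAt_inner_line (s a : ℂ) (x : ℝ) :
    HasDerivAt (fun x : ℝ => ⟪s + x * a, a⟫) (‖a‖ ^ 2) x := by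
  simpa [real_inner_self_eq_norm_sq] using
    (hasDerivAt_add_ofReal_mul s a x).inner ℝ (hasDerivAt_const x a)

theorem deriv_deriv_weighted_cusp_line (s t a b : ℂ) :
    deriv (deriv fun x : ℝ =>
        exp (‖s + x * a‖ ^ 2 + ‖t + x * b‖ ^ 2) * ‖(s + x * a) ^ 2 - (t + x * b) ^ 3‖ ^ 2) 0 =
      exp (‖s‖ ^ 2 + ‖t‖ ^ 2) *
        ((2 * ‖a‖ ^ 2 + 2 * ‖b‖ ^ 2 + (2 * ⟪s, a⟫ + 2 * ⟪t, b⟫) ^ 2) * ‖s ^ 2 - t ^ 3‖ ^ 2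
          + 4 * (2 * ⟪s, a⟫ + 2 * ⟪t, b⟫) * ⟪s ^ 2 - t ^ 3, 2 * s * a - 3 * t ^ 2 * b⟫
          + 2 * ‖2 * s * a - 3 * t ^ 2 * b‖ ^ 2 + 2 * ⟪s ^ 2 - t ^ 3, 2 * a ^ 2 - 6 * t * b ^ 2⟫) := by
  have hu' : HasDerivAt (fun x : ℝ => 2 * ⟪s + x * a, a⟫ + 2 * ⟪t + x * b, b⟫)
      (2 * ‖a‖ ^ 2 + 2 * ‖b‖ ^ 2) 0 :=
    ((hasDerivAt_inner_line s a 0).const_mul 2).add ((hasDerivAt_inner_line t b 0).const_mul 2)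
  have hp' : HasDerivAt (fun x : ℝ => 2 * (s + x * a) * a - 3 * (t + x * b) ^ 2 * b)
      (2 * a ^ 2 - 6 * t * b ^ 2) 0 := by
    refine ((((hasDerivAt_add_ofReal_mul s a 0).const_mul 2).mul_const a).sub
      ((((hasDerivAt_add_ofReal_mul t b 0).fun_pow 2).const_mul 3).mul_const b)).congr_deriv ?_
    push_cast
    ring
  rw [deriv_deriv_exp_mul_norm_sq
    (fun x => (hasDerivAt_norm_sq_line s a x).fun_add (hasDerivAt_norm_sq_line t b x)) hu'
    (hasDerivAt_cusp_line s t a b) hp']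
  simp only [Complex.ofReal_zero, zero_mul, add_zero]

theorem laplacianAtZero_weighted_cusp (s t a b : ℂ) :
    laplacianAtZero (fun lam : ℂ =>
        exp (‖s + lam * a‖ ^ 2 + ‖t + lam * b‖ ^ 2) * ‖(s + lam * a) ^ 2 - (t + lam * b) ^ 3‖ ^ 2) =
      4 * exp (‖s‖ ^ 2 + ‖t‖ ^ 2) * ((‖a‖ ^ 2 + ‖b‖ ^ 2) * ‖s ^ 2 - t ^ 3‖ ^ 2
        + ‖(conj s * a + conj t * b) * (s ^ 2 - t ^ 3) + (2 * s * a - 3 * t ^ 2 * b)‖ ^ 2) := by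
  simp only [laplacianAtZero, mul_assoc _ Complex.I]
  rw [deriv_deriv_weighted_cusp_line, deriv_deriv_weighted_cusp_line]
  simp only [Complex.inner, Complex.sq_norm, Complex.normSq_apply]
  simp only [pow_succ, pow_zero, one_mul, Complex.mul_re, Complex.mul_im, Complex.add_re,
    Complex.add_im, Complex.sub_re, Complex.sub_im, Complex.conj_re, Complex.conj_im,
    Complex.I_re, Complex.I_im]
  ring

/-- `q(s,t) = e^{|s|²+|t|²}|s² − t³|²` is strictly plurisubharmonic off the variety
`V = {s² = t³}`: for `s² ≠ t³` and `L ≠ 0`, the function `λ ↦ q((s,t) + λL)` has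
strictly positive Laplacian at `λ = 0`. -/
theorem strictly_psh_off_variety (q : ℂ × ℂ → ℝ)
    (hq : q = fun p : ℂ × ℂ =>
      Real.exp (‖p.1‖ ^ 2 + ‖p.2‖ ^ 2) *
        ‖p.1 ^ 2 - p.2 ^ 3‖ ^ 2) :
    ∀ s t : ℂ, s ^ 2 ≠ t ^ 3 → ∀ L : ℂ × ℂ, L ≠ 0 →
      0 < laplacianAtZero (fun lam : ℂ => q ((s, t) + lam • L)) := by
  intro s t hst L hL
  have hq_line : (fun lam : ℂ => q ((s, t) + lam • L)) = fun lam : ℂ =>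
      exp (‖s + lam * L.1‖ ^ 2 + ‖t + lam * L.2‖ ^ 2) *
        ‖(s + lam * L.1) ^ 2 - (t + lam * L.2) ^ 3‖ ^ 2 := by
    subst hq
    rfl
  have hL_pos : 0 < ‖L.1‖ ^ 2 + ‖L.2‖ ^ 2 := by
    rcases lt_max_iff.1 (Prod.norm_def L ▸ norm_pos_iff.2 hL) with h | h <;> positivity
  have hF_pos : 0 < ‖s ^ 2 - t ^ 3‖ ^ 2 := by
    have := sub_ne_zero.2 hst
    positivity
  rw [hq_line, laplacianAtZero_weighted_cusp]
  exact mul_pos (by positivity) (add_pos_of_pos_of_nonneg (mul_pos hL_pos hF_pos) (sq_nonneg _))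
end
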